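/- Fix a real number k > 0 that is not an integer. Let S_N(k) denote the closed-form second-order CUE spectral form factor of Proposition 1. Then S_N(k) − (2sin²(πk)/π²)·log N converges as N → ∞ to h(k) = (1 − (2sin²(πk)/π²)ψ₁(k+1))·k − (2sin²(πk)/π²)ψ₀(k+1) − sin(2πk)/(2π) + 2sin²(πk)/π². -/

import Mathlib

open Real Filter Finset

/-- The `k`-th polygamma function: the `(k+1)`-st derivative of `log ∘ Γ`.
(Since `Real.log` of a negative number is the log of its absolute value, this
agrees with the analytic continuation of the polygamma functions.) -/
noncomputable def polygamma (k : ℕ) (x : ℝ) : ℝ :=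
  iteratedDeriv (k + 1) (fun y => Real.log (Real.Gamma y)) x

/-- The digamma function `ψ₀`. -/
noncomputable def digamma (x : ℝ) : ℝ := polygamma 0 x

/-- The trigamma function `ψ₁`. -/
noncomputable def trigamma (x : ℝ) : ℝ := polygamma 1 x


/-- The closed-form second-order CUE spectral form factor of Proposition 1. -/
noncomputable def SFF (N : ℕ) (k : ℝ) : ℝ :=
  min (N : ℝ) (|k| - Real.sin (2 * π * |k|) / (2 * π)) +
    Real.sin (π * |k|) ^ 2 / π ^ 2 *
      (digamma ((N : ℝ) + |k|) + ((N : ℝ) + |k|) * trigamma ((N : ℝ) + |k|) +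
        digamma ((abs ((N : ℝ) - |k|)) + 1) + (abs ((N : ℝ) - |k|)) * trigamma ((abs ((N : ℝ) - |k|)) + 1) -
        2 * |k| * trigamma (|k| + 1) - 2 * digamma (|k| + 1))

/-!
For `N ≥ k + 1` the absolute values and the minimum in `SFF N k` resolve, and the claim reduces
to `ψ₀(x) = log x + o(1)` and `x ψ₁(x) → 1` as `x → ∞`.

Convexity of `log Γ` on `[x, x + 1]`, whose slope there is `log x`, gives
`ψ₀(x) ≤ log x ≤ ψ₀(x + 1) = ψ₀(x) + 1/x`. Together with the recurrence this yields
`ψ₀(x) - ψ₀(1) = ∑ₘ (1/(m + 1) - 1/(x + m))`; differentiating termwise gives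
`ψ₁(x) = ∑ₘ 1/(x + m)²`, which comparison with the telescoping series
`∑ₘ 1/((x + m)(x + m + 1)) = 1/x` squeezes between `1/x` and `1/x + 1/x²`.
-/

open Topology

lemma differentiableAt_log_Gamma {x : ℝ} (hx : 0 < x) :
    DifferentiableAt ℝ (fun y => log (Gamma y)) x :=
  (differentiableAt_Gamma fun m => ((neg_nonpos.2 m.cast_nonneg).trans_lt hx).ne').log
    (Gamma_pos_of_pos hx).ne'

lemma log_Gamma_add_one {x : ℝ} (hx : 0 < x) :
    log (Gamma (x + 1)) = log (Gamma x) + log x := by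
  rw [Gamma_add_one hx.ne', log_mul hx.ne' (Gamma_pos_of_pos hx).ne', add_comm]

lemma digamma_eq_deriv (x : ℝ) : digamma x = deriv (fun y => log (Gamma y)) x := by
  rw [digamma, polygamma, iteratedDeriv_one]

lemma trigamma_eq_deriv_digamma (x : ℝ) : trigamma x = deriv digamma x := by
  rw [trigamma, polygamma, iteratedDeriv_succ, iteratedDeriv_one, ← funext digamma_eq_deriv]

lemma digamma_add_one {x : ℝ} (hx : 0 < x) : digamma (x + 1) = digamma x + x⁻¹ := by
  have hrec : (fun y => log (Gamma (y + 1))) =ᶠ[𝓝 x] fun y => log (Gamma y) + log y := by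
    filter_upwards [eventually_gt_nhds hx] with y hy using log_Gamma_add_one hy
  rw [digamma_eq_deriv, digamma_eq_deriv, ← deriv_comp_add_const, hrec.deriv_eq,
    deriv_fun_add (differentiableAt_log_Gamma hx) (differentiableAt_log hx.ne'), deriv_log]

lemma digamma_add_nat {x : ℝ} (hx : 0 < x) (n : ℕ) :
    digamma (x + n) = digamma x + ∑ m ∈ range n, (x + m)⁻¹ := by
  induction n with
  | zero => simp
  | succ n ih =>
    rw [Nat.cast_succ, ← add_assoc, digamma_add_one (by positivity), ih, sum_range_succ,
      add_assoc]

lemma slope_log_Gamma {x : ℝ} (hx : 0 < x) :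
    slope (fun y => log (Gamma y)) x (x + 1) = log x := by
  rw [slope_def_field, log_Gamma_add_one hx, add_sub_cancel_left, add_sub_cancel_left, div_one]

lemma digamma_le_log {x : ℝ} (hx : 0 < x) : digamma x ≤ log x := by
  rw [digamma_eq_deriv, ← slope_log_Gamma hx]
  exact convexOn_log_Gamma.deriv_le_slope hx (by positivity : (0 : ℝ) < x + 1) (lt_add_one x)
    (differentiableAt_log_Gamma hx)

lemma log_le_digamma_add_one {x : ℝ} (hx : 0 < x) : log x ≤ digamma (x + 1) := by
  rw [digamma_eq_deriv, ← slope_log_Gamma hx]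
  exact convexOn_log_Gamma.slope_le_deriv hx (by positivity : (0 : ℝ) < x + 1) (lt_add_one x)
    (differentiableAt_log_Gamma (by positivity))

lemma tendsto_digamma_sub_log : Tendsto (fun x => digamma x - log x) atTop (𝓝 0) := by
  refine tendsto_of_tendsto_of_tendsto_of_le_of_le'
    (by simpa using (tendsto_inv_atTop_zero (𝕜 := ℝ)).neg) tendsto_const_nhds ?_ ?_
  · filter_upwards [eventually_gt_atTop 0] with x hx
    linarith [log_le_digamma_add_one hx, digamma_add_one hx]
  · filter_upwards [eventually_gt_atTop 0] with x hx
    linarith [digamma_le_log hx]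

lemma tendsto_digamma_natCast_add_sub_log (c : ℝ) :
    Tendsto (fun N : ℕ => digamma (N + c) - log N) atTop (𝓝 0) := by
  have hN : Tendsto (fun N : ℕ => (N : ℝ)) atTop atTop := tendsto_natCast_atTop_atTop
  have := (tendsto_digamma_sub_log.comp (tendsto_atTop_add_const_right _ c hN)).add
    ((tendsto_log_comp_add_sub_log c).comp hN)
  simpa using this

lemma summable_inv_add_sq {a : ℝ} (ha : 0 < a) : Summable fun m : ℕ => ((a + m) ^ 2)⁻¹ :=
  ((Real.summable_one_div_nat_add_rpow a 2).2 one_lt_two).congr fun m => by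
    rw [abs_of_pos (by positivity), Real.rpow_two, one_div, add_comm]

noncomputable def digammaTerm (x : ℝ) (m : ℕ) : ℝ := ((m : ℝ) + 1)⁻¹ - (x + m)⁻¹

lemma digammaTerm_one : digammaTerm 1 = 0 := by
  ext m
  rw [digammaTerm, add_comm (1 : ℝ), sub_self, Pi.zero_apply]

lemma hasDerivAt_digammaTerm (m : ℕ) {y : ℝ} (hy : 0 < y) :
    HasDerivAt (digammaTerm · m) ((y + m) ^ 2)⁻¹ y := by
  have h := ((hasDerivAt_id' y).add_const (m : ℝ)).inv (by positivity : y + m ≠ 0)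
  exact (h.const_sub _).congr_deriv (by rw [neg_div, neg_neg, one_div])

lemma norm_inv_add_sq_le {a y : ℝ} (ha : 0 < a) (hy : a < y) (m : ℕ) :
    ‖((y + m) ^ 2)⁻¹‖ ≤ ((a + m) ^ 2)⁻¹ := by
  rw [Real.norm_of_nonneg (by positivity)]
  gcongr

lemma summable_digammaTerm {x : ℝ} (hx : 0 < x) : Summable (digammaTerm x) := by
  obtain ⟨a, ha, hax1⟩ := exists_between (lt_min hx one_pos)
  exact summable_of_summable_hasDerivAt_of_isPreconnected (summable_inv_add_sq ha) isOpen_Ioi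
    isPreconnected_Ioi (fun m y hy => hasDerivAt_digammaTerm m (ha.trans hy))
    (fun m y hy => norm_inv_add_sq_le ha hy m) (lt_min_iff.1 hax1).2
    (digammaTerm_one ▸ summable_zero) (lt_min_iff.1 hax1).1

lemma hasDerivAt_tsum_digammaTerm {x : ℝ} (hx : 0 < x) :
    HasDerivAt (fun y => ∑' m, digammaTerm y m) (∑' m : ℕ, ((x + m) ^ 2)⁻¹) x := by
  obtain ⟨a, ha, hax1⟩ := exists_between (lt_min hx one_pos)
  exact hasDerivAt_tsum_of_isPreconnected (summable_inv_add_sq ha) isOpen_Ioi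
    isPreconnected_Ioi (fun m y hy => hasDerivAt_digammaTerm m (ha.trans hy))
    (fun m y hy => norm_inv_add_sq_le ha hy m) (lt_min_iff.1 hax1).2
    (digammaTerm_one ▸ summable_zero) (lt_min_iff.1 hax1).1

lemma hasSum_digammaTerm {x : ℝ} (hx : 0 < x) :
    HasSum (digammaTerm x) (digamma x - digamma 1) := by
  rw [(summable_digammaTerm hx).hasSum_iff_tendsto_nat]
  have hpartial (n : ℕ) : ∑ m ∈ range n, (((m : ℝ) + 1)⁻¹ - (x + m)⁻¹) =
      digamma x - digamma 1 + ((digamma (n + 1) - log n) - (digamma (n + x) - log n)) := by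
    rw [sum_sub_distrib, add_comm (n : ℝ) 1, add_comm (n : ℝ) x,
      digamma_add_nat one_pos, digamma_add_nat hx]
    simp_rw [add_comm (1 : ℝ)]
    ring
  simp_rw [digammaTerm, hpartial]
  simpa using ((tendsto_digamma_natCast_add_sub_log 1).sub
    (tendsto_digamma_natCast_add_sub_log x)).const_add (digamma x - digamma 1)

lemma trigamma_eq_tsum {x : ℝ} (hx : 0 < x) : trigamma x = ∑' m : ℕ, ((x + m) ^ 2)⁻¹ := by
  have hψ : digamma =ᶠ[𝓝 x] fun y => digamma 1 + ∑' m, digammaTerm y m := by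
    filter_upwards [eventually_gt_nhds hx] with y hy
    rw [(hasSum_digammaTerm hy).tsum_eq, add_sub_cancel]
  rw [trigamma_eq_deriv_digamma, hψ.deriv_eq]
  exact ((hasDerivAt_tsum_digammaTerm hx).const_add _).deriv

lemma hasSum_sub_succ_of_antitone {f : ℕ → ℝ} (hf : Antitone f)
    (h : Tendsto f atTop (𝓝 0)) :
    HasSum (fun n => f n - f (n + 1)) (f 0) := by
  rw [hasSum_iff_tendsto_nat_of_nonneg fun n => sub_nonneg.2 (hf n.le_succ)]
  simp_rw [sum_range_sub']
  simpa using tendsto_const_nhds.sub h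

lemma hasSum_inv_add_sub_inv_add_succ {x : ℝ} (hx : 0 < x) :
    HasSum (fun m : ℕ => (x + m)⁻¹ - (x + (m + 1 : ℕ))⁻¹) x⁻¹ := by
  have h := hasSum_sub_succ_of_antitone (f := fun m : ℕ => (x + m)⁻¹)
    (fun m n hmn => by dsimp only; gcongr)
    (tendsto_inv_atTop_zero.comp (tendsto_atTop_add_const_left _ x tendsto_natCast_atTop_atTop))
  simpa using h

lemma inv_sub_inv_add_one {y : ℝ} (hy : 0 < y) : y⁻¹ - (y + 1)⁻¹ = (y * (y + 1))⁻¹ := by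
  field_simp
  ring

lemma inv_le_trigamma {x : ℝ} (hx : 0 < x) : x⁻¹ ≤ trigamma x := by
  rw [trigamma_eq_tsum hx]
  refine hasSum_le (fun m => ?_) (hasSum_inv_add_sub_inv_add_succ hx)
    (summable_inv_add_sq hx).hasSum
  rw [Nat.cast_succ, ← add_assoc, inv_sub_inv_add_one (by positivity)]
  gcongr
  nlinarith

lemma trigamma_le {x : ℝ} (hx : 0 < x) : trigamma x ≤ x⁻¹ + (x ^ 2)⁻¹ := by
  have h := (summable_inv_add_sq hx).hasSum
  rw [← hasSum_nat_add_iff' 1] at h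
  have hle := hasSum_le (fun m => ?_) h (hasSum_inv_add_sub_inv_add_succ hx)
  · rw [trigamma_eq_tsum hx]
    simp only [range_one, sum_singleton, Nat.cast_zero, add_zero] at hle
    linarith
  · rw [Nat.cast_succ, ← add_assoc, inv_sub_inv_add_one (by positivity)]
    gcongr
    nlinarith

lemma tendsto_mul_trigamma : Tendsto (fun x => x * trigamma x) atTop (𝓝 1) := by
  refine tendsto_of_tendsto_of_tendsto_of_le_of_le' tendsto_const_nhds
    (by simpa using (tendsto_inv_atTop_zero (𝕜 := ℝ)).const_add 1) ?_ ?_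
  · filter_upwards [eventually_gt_atTop 0] with x hx
    calc 1 = x * x⁻¹ := (mul_inv_cancel₀ hx.ne').symm
      _ ≤ x * trigamma x := by gcongr; exact inv_le_trigamma hx
  · filter_upwards [eventually_gt_atTop 0] with x hx
    calc x * trigamma x ≤ x * (x⁻¹ + (x ^ 2)⁻¹) := by gcongr; exact trigamma_le hx
      _ = 1 + x⁻¹ := by field_simp

lemma tendsto_add_mul_trigamma (c : ℝ) :
    Tendsto (fun x => (x + c) * trigamma x) atTop (𝓝 1) := by
  have h := tendsto_mul_trigamma.add ((tendsto_mul_trigamma.mul tendsto_inv_atTop_zero).const_mul c)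
  rw [mul_zero, mul_zero, add_zero] at h
  refine h.congr' ?_
  filter_upwards [eventually_ne_atTop 0] with x hx
  field_simp

lemma tendsto_natCast_add_mul_trigamma (c d : ℝ) :
    Tendsto (fun N : ℕ => (N + c) * trigamma (N + d)) atTop (𝓝 1) := by
  have h := (tendsto_add_mul_trigamma (c - d)).comp
    (tendsto_atTop_add_const_right _ d tendsto_natCast_atTop_atTop)
  refine h.congr fun N => ?_
  simp only [Function.comp_apply]
  ring

lemma SFF_of_add_one_le {N : ℕ} {k : ℝ} (hk : 0 < k) (hN : k + 1 ≤ N) :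
    SFF N k = k - sin (2 * π * k) / (2 * π) + sin (π * k) ^ 2 / π ^ 2 *
      (digamma (N + k) + (N + k) * trigamma (N + k) + digamma (N - k + 1) +
        (N - k) * trigamma (N - k + 1) - 2 * k * trigamma (k + 1) - 2 * digamma (k + 1)) := by
  have hsin : -1 ≤ sin (2 * π * k) / (2 * π) := by
    rw [le_div_iff₀ (by positivity)]
    nlinarith [neg_one_le_sin (2 * π * k), pi_gt_three]
  rw [SFF, abs_of_pos hk, abs_of_nonneg (by linarith : (0 : ℝ) ≤ N - k),
    min_eq_right (by linarith)]

theorem sff_log_growth_general (k : ℝ) (hk : 0 < k) :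
    Filter.Tendsto
      (fun N : ℕ => SFF N k - 2 * Real.sin (π * k) ^ 2 / π ^ 2 * Real.log N)
      Filter.atTop
      (nhds ((1 - 2 * Real.sin (π * k) ^ 2 / π ^ 2 * trigamma (k + 1)) * k -
        2 * Real.sin (π * k) ^ 2 / π ^ 2 * digamma (k + 1) -
        Real.sin (2 * π * k) / (2 * π) + 2 * Real.sin (π * k) ^ 2 / π ^ 2)) := by
  have hψ₀ := (tendsto_digamma_natCast_add_sub_log k).add
    (tendsto_digamma_natCast_add_sub_log (1 - k))
  have hψ₁ := (tendsto_natCast_add_mul_trigamma k k).add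
    (tendsto_natCast_add_mul_trigamma (-k) (1 - k))
  have hlim := ((hψ₀.add hψ₁).const_mul (sin (π * k) ^ 2 / π ^ 2)).const_add
    (k - sin (2 * π * k) / (2 * π) -
      sin (π * k) ^ 2 / π ^ 2 * (2 * k * trigamma (k + 1) + 2 * digamma (k + 1)))
  convert hlim.congr' ?_ using 2
  · ring
  · filter_upwards [eventually_ge_atTop ⌈k + 1⌉₊] with N hN
    rw [SFF_of_add_one_le hk ((Nat.le_ceil _).trans (Nat.cast_le.2 hN)),
      show (N : ℝ) - k + 1 = N + (1 - k) by ring]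
    ring

/-- For fixed non-integer `k > 0`, `S_N(k) − (2 sin²(πk)/π²) log N` converges to `h(k)`. -/
theorem sff_log_growth (k : ℝ) (hk : 0 < k) (hki : ∀ n : ℤ, k ≠ (n : ℝ)) :
    Filter.Tendsto
      (fun N : ℕ => SFF N k - 2 * Real.sin (π * k) ^ 2 / π ^ 2 * Real.log N)
      Filter.atTop
      (nhds ((1 - 2 * Real.sin (π * k) ^ 2 / π ^ 2 * trigamma (k + 1)) * k -
        2 * Real.sin (π * k) ^ 2 / π ^ 2 * digamma (k + 1) -
        Real.sin (2 * π * k) / (2 * π) + 2 * Real.sin (π * k) ^ 2 / π ^ 2)) :=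
  sff_log_growth_general k hk
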